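/- arXiv:2204.10213 — 4 statements merged into one kernel-verified Lean document; each statement's English description precedes it below -/
import Mathlib

section
/- (Lexicographical theorem) Let 𝓐 and 𝓑 be families of subsets of a common finite ground set O, linearly ordered by ≻, such that 𝓐 is dual to 𝓑, and let A⁰ ∈ 𝓐 be a lexmax edge, i.e., A⁰ ⪰_L A for every A ∈ 𝓐. Then for every o⁰ ∈ A⁰ there exists an edge B⁰ ∈ 𝓑 such that A⁰ ∩ B⁰ = {o⁰} and o⁰ ⪰ o for each o ∈ B⁰. -/
/-- `LexGt X Y` means `X ≻_L Y`: the subsets are distinct and the smallest element of the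
symmetric difference `(X \ Y) ∪ (Y \ X)` belongs to `Y`. -/
def LexGt {α : Type*} [LinearOrder α] (X Y : Finset α) : Prop :=
  ∃ o ∈ Y, o ∉ X ∧ ∀ o' ∈ (X \ Y) ∪ (Y \ X), o ≤ o'

/-- `𝓐` is dual to `𝓑`: (i) every edge of `𝓐` meets every edge of `𝓑`, and
(iv) every subset of the ground set meeting all edges of `𝓑` contains an edge of `𝓐`. -/
def Dual {α : Type*} [DecidableEq α] (𝓐 𝓑 : Set (Finset α)) : Prop :=
  (∀ A ∈ 𝓐, ∀ B ∈ 𝓑, (A ∩ B).Nonempty) ∧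
    (∀ T : Finset α, (∀ B ∈ 𝓑, (T ∩ B).Nonempty) → ∃ A ∈ 𝓐, A ⊆ T)

/-! Let `T` be `A⁰` with `o⁰` deleted and every element above `o⁰` added. No edge `A` of `𝓐`
fits in `T`: then `o⁰ ∈ A⁰ \ A`, so `A⁰ ≻_L A` puts the first element of the symmetric
difference in `A \ A⁰` below `o⁰`, hence outside `T`. By duality some `B⁰ ∈ 𝓑` misses `T`,
i.e. lies weakly below `o⁰` and meets `A⁰` at most in `o⁰`; it does meet `A⁰`, as `A⁰ ∈ 𝓐`. -/

theorem LexGt.exists_lt_of_mem_sdiff {α : Type*} [LinearOrder α] {X Y : Finset α}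
    (hXY : LexGt X Y) {o : α} (hoX : o ∈ X) (hoY : o ∉ Y) : ∃ m ∈ Y, m ∉ X ∧ m < o := by
  obtain ⟨m, hmY, hmX, hmin⟩ := hXY
  refine ⟨m, hmY, hmX, lt_of_le_of_ne ?_ ?_⟩
  · exact hmin o (by simp [hoX, hoY])
  · rintro rfl
    exact hmX hoX

theorem Dual.exists_disjoint {α : Type*} [DecidableEq α] {𝓐 𝓑 : Set (Finset α)}
    (h : Dual 𝓐 𝓑) {T : Finset α} (hT : ∀ A ∈ 𝓐, ¬ A ⊆ T) : ∃ B ∈ 𝓑, Disjoint T B := by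
  by_contra! hmeets
  obtain ⟨A, hA, hAT⟩ := h.2 T fun B hB => Finset.not_disjoint_iff_nonempty_inter.mp (hmeets B hB)
  exact hT A hA hAT

theorem not_subset_erase_union_of_lexGt_or_eq {α : Type*} [Fintype α] [LinearOrder α]
    {A0 A : Finset α} (hA : LexGt A0 A ∨ A0 = A) {o0 : α} (ho0 : o0 ∈ A0) :
    ¬ A ⊆ A0.erase o0 ∪ Finset.univ.filter (o0 < ·) := by
  intro hAT
  have ho0A : o0 ∉ A := fun ho0A => by simpa using hAT ho0A
  rcases hA with hgt | rfl
  · obtain ⟨m, hmA, hmA0, hmo0⟩ := hgt.exists_lt_of_mem_sdiff ho0 ho0A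
    have := hAT hmA
    simp only [Finset.mem_union, Finset.mem_erase, Finset.mem_filter, Finset.mem_univ,
      true_and] at this
    rcases this with ⟨-, hmA0'⟩ | ho0m
    · exact hmA0 hmA0'
    · exact lt_asymm hmo0 ho0m
  · exact ho0A ho0

/-- Lexicographical theorem: if `A⁰` is a lexmax edge of `𝓐` then for every `o⁰ ∈ A⁰`
there is an edge `B⁰ ∈ 𝓑` with `A⁰ ∩ B⁰ = {o⁰}` and `o⁰ ⪰ o` for each `o ∈ B⁰`. -/
theorem lexicographical_theorem {α : Type*} [Fintype α] [LinearOrder α]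
    (𝓐 𝓑 : Set (Finset α)) (h : Dual 𝓐 𝓑)
    (A0 : Finset α) (hA0 : A0 ∈ 𝓐) (hlex : ∀ A ∈ 𝓐, LexGt A0 A ∨ A0 = A) :
    ∀ o0 ∈ A0, ∃ B0 ∈ 𝓑, A0 ∩ B0 = {o0} ∧ ∀ o ∈ B0, o ≤ o0 := by
  intro o0 ho0
  obtain ⟨B0, hB0, hdisj⟩ := h.exists_disjoint fun A hA =>
    not_subset_erase_union_of_lexGt_or_eq (hlex A hA) ho0
  have hB0T : ∀ o ∈ B0, (o ∈ A0 → o = o0) ∧ o ≤ o0 := fun o ho => by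
    simpa [not_or, not_lt, not_imp_not] using Finset.disjoint_right.mp hdisj ho
  refine ⟨B0, hB0, Finset.eq_singleton_iff_nonempty_unique_mem.mpr ⟨h.1 A0 hA0 B0 hB0, ?_⟩,
    fun o ho => (hB0T o ho).2⟩
  intro o ho
  rw [Finset.mem_inter] at ho
  exact (hB0T o ho.2).1 ho.1
end

section
/- Let 𝓐 and 𝓑 be families of subsets of a common finite ground set O satisfying condition (i): A ∩ B ≠ ∅ for every A ∈ 𝓐 and B ∈ 𝓑. Then condition (iv a) holds (every subset T ⊆ O with T ∩ B ≠ ∅ for all B ∈ 𝓑 contains some edge of 𝓐) if and only if condition (iv b) holds (every subset T ⊆ O with T ∩ A ≠ ∅ for all A ∈ 𝓐 contains some edge of 𝓑). In other words, 𝓐 is dual to 𝓑 if and only if 𝓑 is dual to 𝓐. -/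
lemma dual_one_dir {α : Type*} [Fintype α] [DecidableEq α]
    (𝓐 𝓑 : Set (Finset α))
    (h : ∀ T : Finset α, (∀ B ∈ 𝓑, (T ∩ B).Nonempty) → ∃ A ∈ 𝓐, A ⊆ T) :
    ∀ T : Finset α, (∀ A ∈ 𝓐, (T ∩ A).Nonempty) → ∃ B ∈ 𝓑, B ⊆ T := by
  intro T hT
  by_contra hc
  push_neg at hc
  have h2 : ∀ B ∈ 𝓑, (Tᶜ ∩ B).Nonempty := by
    intro B hB
    obtain ⟨x, hx, hxT⟩ := Finset.not_subset.mp (hc B hB)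
    exact ⟨x, Finset.mem_inter.mpr ⟨Finset.mem_compl.mpr hxT, hx⟩⟩
  obtain ⟨A, hA, hAsub⟩ := h Tᶜ h2
  obtain ⟨x, hx⟩ := hT A hA
  rw [Finset.mem_inter] at hx
  exact Finset.mem_compl.mp (hAsub hx.2) hx.1

/-- Given condition (i), conditions (iv a) and (iv b) are equivalent: duality is symmetric. -/
theorem duality_symmetric {α : Type*} [Fintype α] [DecidableEq α]
    (𝓐 𝓑 : Set (Finset α))
    (hi : ∀ A ∈ 𝓐, ∀ B ∈ 𝓑, (A ∩ B).Nonempty) :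
    ((∀ T : Finset α, (∀ B ∈ 𝓑, (T ∩ B).Nonempty) → ∃ A ∈ 𝓐, A ⊆ T) ↔
      (∀ T : Finset α, (∀ A ∈ 𝓐, (T ∩ A).Nonempty) → ∃ B ∈ 𝓑, B ⊆ T)) := by
  exact ⟨dual_one_dir 𝓐 𝓑, dual_one_dir 𝓑 𝓐⟩
end

section
/- (Correctness of the greedy construction of the lexmax edge) Let 𝓐 be a nonempty family of subsets of a finite set O equipped with a linear order ≻, and let A⁰ ∈ 𝓐 be a lexmax edge, i.e., A⁰ ⪰_L A for every A ∈ 𝓐. Then for every element o ∈ O: o ∈ A⁰ if and only if no edge A ∈ 𝓐 is contained in the set {o' ∈ A⁰ : o' ≺ o} ∪ {o'' ∈ O : o'' ≻ o}. -/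
/-- `LexGe X Y` means `X ⪰_L Y`. -/
def LexGe {α : Type*} [LinearOrder α] (X Y : Finset α) : Prop :=
  LexGt X Y ∨ X = Y

/-- Correctness of the greedy construction of the lexmax edge `A⁰`:
`o ∈ A⁰` iff no edge of `𝓐` is contained in `{o' ∈ A⁰ : o' ≺ o} ∪ {o'' ∈ O : o'' ≻ o}`. -/
theorem greedy_lexmax_correct {α : Type*} [Fintype α] [LinearOrder α]
    (𝓐 : Set (Finset α)) (A0 : Finset α) (hA0 : A0 ∈ 𝓐)
    (hlex : ∀ A ∈ 𝓐, LexGe A0 A) (o : α) :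
    o ∈ A0 ↔
      ¬ ∃ A ∈ 𝓐, A ⊆ (A0.filter (· < o)) ∪ (Finset.univ.filter (o < ·)) := by
  constructor
  · rintro ho ⟨A, hA, hsub⟩
    have hoA : o ∉ A := by
      intro hoA
      rcases Finset.mem_union.1 (hsub hoA) with h | h
      · exact absurd (Finset.mem_filter.1 h).2 (lt_irrefl o)
      · exact absurd (Finset.mem_filter.1 h).2 (lt_irrefl o)
    rcases hlex A hA with ⟨m, hmA, hmA0, hmin⟩ | rfl
    · have hmo : m ≤ o := hmin o (Finset.mem_union.2 (Or.inl (Finset.mem_sdiff.2 ⟨ho, hoA⟩)))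
      have hmlt : m < o := lt_of_le_of_ne hmo (by rintro rfl; exact hmA0 ho)
      rcases Finset.mem_union.1 (hsub hmA) with h | h
      · exact hmA0 (Finset.mem_filter.1 h).1
      · exact absurd (Finset.mem_filter.1 h).2 (not_lt.2 hmlt.le)
    · exact hoA ho
  · intro h
    by_contra ho
    exact h ⟨A0, hA0, fun x hx => Finset.mem_union.2 (by
      rcases lt_or_gt_of_ne (fun hxo : x = o => ho (hxo ▸ hx)) with hlt | hgt
      · exact Or.inl (Finset.mem_filter.2 ⟨hx, hlt⟩)
      · exact Or.inr (Finset.mem_filter.2 ⟨Finset.mem_univ x, hgt⟩))⟩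
end

section
/- (Lexmax Nash equilibrium of Alice) Let 𝓐 and 𝓑 be dual families of subsets of a common finite ground set O, let g : 𝓐 × 𝓑 → O be a tight game form, and let ≻_a and ≻_b be linear orders on O. Let A⁰ ∈ 𝓐 be a lexmax edge with respect to the lexicographic order induced by ≻_a, and let o⁰ be the ≻_b-maximal element of A⁰. Then there exists B⁰ ∈ 𝓑 such that A⁰ ∩ B⁰ = {o⁰} (hence g(A⁰,B⁰) = o⁰) and the pair (A⁰, B⁰) is a Nash equilibrium of the game (g, ≻_a, ≻_b). -/
/-- `LexGtR r X Y` means `X ≻_L Y` with respect to the linear order `r`: the subsets are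
distinct and the `r`-smallest element of the symmetric difference belongs to `Y`. -/
def LexGtR {α : Type*} [DecidableEq α] (r : LinearOrder α) (X Y : Finset α) : Prop :=
  ∃ o ∈ Y, o ∉ X ∧ ∀ o' ∈ (X \ Y) ∪ (Y \ X), r.le o o'

/-! Take for `B⁰` an edge of `𝓑` inside `T = {o ⪯_a o⁰ : o ∉ A⁰} ∪ {o⁰}`. It exists by duality as
soon as every edge `A` of `𝓐` meets `T`: either `o⁰ ∈ A`, or `A ≠ A⁰` and lexmaximality of `A⁰`
puts the `≻_a`-smallest element of `A ∆ A⁰`, which is below `o⁰ ∈ A⁰ \ A`, into `A \ A⁰ ⊆ T`.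
Then `A⁰ ∩ B⁰ = {o⁰}`, Alice can only reach outcomes of `B⁰ ⊆ T`, all `⪯_a o⁰`, and Bob can only
reach outcomes of `A⁰`, all `⪯_b o⁰`. -/

section

variable {α : Type*} [DecidableEq α]

theorem Dual.exists_subset_of_forall_inter_nonempty [Fintype α] {𝓐 𝓑 : Set (Finset α)}
    (h : Dual 𝓐 𝓑) {T : Finset α} (hT : ∀ A ∈ 𝓐, (A ∩ T).Nonempty) : ∃ B ∈ 𝓑, B ⊆ T := by
  by_contra! hB
  have hcompl : ∀ B ∈ 𝓑, (Tᶜ ∩ B).Nonempty := fun B hB' => by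
    obtain ⟨o, hoB, hoT⟩ := Finset.not_subset.1 (hB B hB')
    exact ⟨o, Finset.mem_inter.2 ⟨Finset.mem_compl.2 hoT, hoB⟩⟩
  obtain ⟨A, hA, hAT⟩ := h.2 _ hcompl
  obtain ⟨o, ho⟩ := hT A hA
  obtain ⟨hoA, hoT⟩ := Finset.mem_inter.1 ho
  exact Finset.mem_compl.1 (hAT hoA) hoT

theorem LexGtR.exists_mem_sdiff_le {r : LinearOrder α} {X Y : Finset α} (h : LexGtR r X Y)
    {x : α} (hxX : x ∈ X) (hxY : x ∉ Y) : ∃ y ∈ Y, y ∉ X ∧ r.le y x := by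
  obtain ⟨y, hyY, hyX, hmin⟩ := h
  exact ⟨y, hyY, hyX, hmin x (Finset.mem_union_left _ (Finset.mem_sdiff.2 ⟨hxX, hxY⟩))⟩

theorem Dual.exists_inter_eq_singleton_of_lexmax [Fintype α] {𝓐 𝓑 : Set (Finset α)}
    (h : Dual 𝓐 𝓑) {r : LinearOrder α} {A0 : Finset α} (hA0 : A0 ∈ 𝓐)
    (hlex : ∀ A ∈ 𝓐, LexGtR r A0 A ∨ A0 = A) {o0 : α} (ho0 : o0 ∈ A0) :
    ∃ B0 ∈ 𝓑, A0 ∩ B0 = {o0} ∧ ∀ o ∈ B0, r.le o o0 := by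
  classical
  set T := Finset.univ.filter fun o => r.le o o0 ∧ (o ∈ A0 → o = o0)
  have ho0T : o0 ∈ T := by simp [T]
  have hmeet : ∀ A ∈ 𝓐, (A ∩ T).Nonempty := by
    intro A hA
    by_cases ho0A : o0 ∈ A
    · exact ⟨o0, Finset.mem_inter.2 ⟨ho0A, ho0T⟩⟩
    rcases hlex A hA with hgt | rfl
    · obtain ⟨o, hoA, hoA0, hle⟩ := hgt.exists_mem_sdiff_le ho0 ho0A
      exact ⟨o, Finset.mem_inter.2 ⟨hoA, by simp [T, hle, hoA0]⟩⟩
    · exact absurd ho0 ho0A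
  obtain ⟨B0, hB0, hB0T⟩ := h.exists_subset_of_forall_inter_nonempty hmeet
  have hsub : A0 ∩ B0 ⊆ {o0} := fun o ho => by
    obtain ⟨hoA0, hoB0⟩ := Finset.mem_inter.1 ho
    exact Finset.mem_singleton.2 ((Finset.mem_filter.1 (hB0T hoB0)).2.2 hoA0)
  refine ⟨B0, hB0, (h.1 A0 hA0 B0 hB0).subset_singleton_iff.1 hsub, fun o ho => ?_⟩
  exact (Finset.mem_filter.1 (hB0T ho)).2.1

end

/-- Lexmax Nash equilibrium of Alice: if `A⁰` is lexmax for Alice's preference `≻_a`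
and `o⁰` is Bob's best outcome in `A⁰`, then there is a strategy `B⁰` of Bob with
`A⁰ ∩ B⁰ = {o⁰}`, and `(A⁰, B⁰)` is a Nash equilibrium. -/
theorem lexmax_nash_equilibrium {α : Type*} [Fintype α] [DecidableEq α]
    (𝓐 𝓑 : Set (Finset α)) (h : Dual 𝓐 𝓑)
    (g : 𝓐 → 𝓑 → α)
    (hg : ∀ (A : 𝓐) (B : 𝓑), g A B ∈ (A : Finset α) ∩ (B : Finset α))
    (ra rb : LinearOrder α)
    (A0 : Finset α) (hA0 : A0 ∈ 𝓐)
    (hlex : ∀ A ∈ 𝓐, LexGtR ra A0 A ∨ A0 = A)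
    (o0 : α) (ho0 : o0 ∈ A0) (hmax : ∀ o ∈ A0, rb.le o o0) :
    ∃ B0, ∃ hB0 : B0 ∈ 𝓑,
      A0 ∩ B0 = {o0} ∧
      g ⟨A0, hA0⟩ ⟨B0, hB0⟩ = o0 ∧
      (∀ A' : 𝓐, ra.le (g A' ⟨B0, hB0⟩) (g ⟨A0, hA0⟩ ⟨B0, hB0⟩)) ∧
      (∀ B' : 𝓑, rb.le (g ⟨A0, hA0⟩ B') (g ⟨A0, hA0⟩ ⟨B0, hB0⟩)) := by
  obtain ⟨B0, hB0, hinter, hB0le⟩ := h.exists_inter_eq_singleton_of_lexmax hA0 hlex ho0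
  have hgval : g ⟨A0, hA0⟩ ⟨B0, hB0⟩ = o0 := by
    simpa [hinter] using hg ⟨A0, hA0⟩ ⟨B0, hB0⟩
  refine ⟨B0, hB0, hinter, hgval, fun A' => ?_, fun B' => ?_⟩
  · rw [hgval]
    exact hB0le _ (Finset.mem_inter.1 (hg A' ⟨B0, hB0⟩)).2
  · rw [hgval]
    exact hmax _ (Finset.mem_inter.1 (hg ⟨A0, hA0⟩ B')).1
end
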